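/- arXiv:2312.17079 — 2 statements merged into one kernel-verified Lean document; each statement's English description precedes it below -/
import Mathlib

section
/- Integration-by-parts bracket identity: Let u, ρ : ℝ → ℝ be smooth with u Schwartz and ρ together with all its derivatives bounded, and define ⟨n, m, a⟩ := ∫_ℝ (∂_x^n u)(∂_x^m u) ρ^{(a)} dx for nonnegative integers n, m, a. Then for every n ≥ 1 and every k ∈ {1, 2, …, n} and every integer a ≥ 0, there exist positive constants c_j = c_j(n, k) (j = 0, …, ⌊k/2⌋) such that ⟨n, n−k, a⟩ = Σ_{j=0}^{⌊k/2⌋} c_j (−1)^{k+j} ⟨n−k+j, n−k+j, a+k−2j⟩, where ⌊x⌋ is the greatest integer ≤ x. -/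
open MeasureTheory Real Set
open scoped ENNReal

noncomputable section

def mixedNorm (a : ℝ) (b : ℝ≥0∞) (T : ℝ) (u : ℝ → ℝ → ℂ) : ℝ≥0∞ :=
  (∫⁻ t in Set.Ioc (0:ℝ) T, (eLpNorm (u t) b volume) ^ a) ^ (1/a)

def xSupNorm (T : ℝ) (u : ℝ → ℝ → ℂ) : ℝ≥0∞ :=
  essSup (fun x : ℝ => (∫⁻ t in Set.Ioc (0:ℝ) T, (‖u t x‖₊ : ℝ≥0∞) ^ (2:ℝ)) ^ (1/2 : ℝ)) volume

def hsNorm (s : ℝ) (f : ℝ → ℂ) : ℝ≥0∞ :=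
  eLpNorm (fun ξ : ℝ => ((1 + ξ^2) ^ (s/2) : ℝ) • FourierTransform.fourier f ξ) 2 volume

def InHs (s : ℝ) (f : ℝ → ℂ) : Prop :=
  MemLp f 2 volume ∧ hsNorm s f < ⊤

def wNorm (r : ℝ) (f : ℝ → ℂ) : ℝ≥0∞ :=
  eLpNorm (fun x : ℝ => (|x| ^ r : ℝ) • f x) 2 volume

def eWNorm (b : ℝ) (f : ℝ → ℂ) : ℝ≥0∞ :=
  eLpNorm (fun x : ℝ => Real.exp (b * x) • f x) 2 volume

def Duhamel (V : ℝ → (ℝ → ℂ) → ℝ → ℂ) (T : ℝ) (u₀ : ℝ → ℂ) (u : ℝ → ℝ → ℂ) : Prop :=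
  ∀ t ∈ Set.Icc (0:ℝ) T, ∀ x : ℝ,
    u t x = V t u₀ x - ∫ t' in Set.Ioc (0:ℝ) t,
      V (t - t') (fun y => u t' y * deriv (u t') y) x

def ContHs (s T : ℝ) (u : ℝ → ℝ → ℂ) : Prop :=
  ∀ t₀ ∈ Set.Icc (0:ℝ) T, ∀ ε : ℝ, 0 < ε → ∃ δ > 0, ∀ t ∈ Set.Icc (0:ℝ) T,
    |t - t₀| < δ → hsNorm s (fun x => u t x - u t₀ x) < ENNReal.ofReal ε

def ContW (r T : ℝ) (u : ℝ → ℝ → ℂ) : Prop :=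
  ∀ t₀ ∈ Set.Icc (0:ℝ) T, ∀ ε : ℝ, 0 < ε → ∃ δ > 0, ∀ t ∈ Set.Icc (0:ℝ) T,
    |t - t₀| < δ → wNorm r (fun x => u t x - u t₀ x) < ENNReal.ofReal ε

def ContE (b T : ℝ) (u : ℝ → ℝ → ℂ) : Prop :=
  ∀ t₀ ∈ Set.Icc (0:ℝ) T, ∀ ε : ℝ, 0 < ε → ∃ δ > 0, ∀ t ∈ Set.Icc (0:ℝ) T,
    |t - t₀| < δ → eWNorm b (fun x => u t x - u t₀ x) < ENNReal.ofReal ε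

def classNorm (Ds : ℝ → (ℝ → ℂ) → ℝ → ℂ) (s T : ℝ) (u : ℝ → ℝ → ℂ) : ℝ≥0∞ :=
  mixedNorm 2 (ENNReal.ofReal 4) T (fun t => Ds s (deriv (u t)))
  + mixedNorm 2 (ENNReal.ofReal 4) T (fun t => deriv (u t))
  + mixedNorm 2 (ENNReal.ofReal 4) T u
  + mixedNorm 2 (ENNReal.ofReal 4) T (fun t => Ds s (u t))

end

noncomputable def bracket (u ρ : ℝ → ℝ) (n m a : ℕ) : ℝ :=
  ∫ x : ℝ, iteratedDeriv n u x * iteratedDeriv m u x * iteratedDeriv a ρ x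

namespace BracketReductionAux
open MeasureTheory SchwartzMap Filter

noncomputable def Dn (n : ℕ) (u : SchwartzMap ℝ ℝ) : SchwartzMap ℝ ℝ := (derivCLM ℝ ℝ)^[n] u

lemma Dn_coe (n : ℕ) (u : SchwartzMap ℝ ℝ) : ⇑(Dn n u) = iteratedDeriv n (⇑u) := by
  induction n with
  | zero => simp [Dn]
  | succ n ih =>
    rw [iteratedDeriv_succ, ← ih]
    show ⇑((derivCLM ℝ ℝ)^[n+1] u) = _
    rw [Function.iterate_succ_apply']
    ext x
    exact derivCLM_apply (𝕜 := ℝ) (F := ℝ) _ x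

lemma schwartz_bdd (f : SchwartzMap ℝ ℝ) : ∃ C, ∀ x : ℝ, ‖f x‖ ≤ C := by
  obtain ⟨C, hC⟩ := f.decay 0 0
  exact ⟨C, fun x => by simpa using hC.2 x⟩

lemma schwartz_tendsto_cocompact (f : SchwartzMap ℝ ℝ) :
    Tendsto f (Filter.cocompact ℝ) (nhds 0) := zero_at_infty f

lemma schwartz_tendsto_atTop (f : SchwartzMap ℝ ℝ) : Tendsto f atTop (nhds 0) :=
  (schwartz_tendsto_cocompact f).mono_left
    (by rw [cocompact_eq_atBot_atTop]; exact le_sup_right)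

lemma schwartz_tendsto_atBot (f : SchwartzMap ℝ ℝ) : Tendsto f atBot (nhds 0) :=
  (schwartz_tendsto_cocompact f).mono_left
    (by rw [cocompact_eq_atBot_atTop]; exact le_sup_left)

lemma rho_diff {ρ : ℝ → ℝ} (hρ : ContDiff ℝ (⊤ : ℕ∞) ρ) (a : ℕ) : Differentiable ℝ (iteratedDeriv a ρ) := by
  apply hρ.differentiable_iteratedDeriv
  exact_mod_cast lt_top_iff_ne_top.2 (by simp)

lemma term_integrable (u : SchwartzMap ℝ ℝ) {ρ : ℝ → ℝ} (hρ : ContDiff ℝ (⊤ : ℕ∞) ρ)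
    (hbd : ∀ i : ℕ, ∃ C : ℝ, ∀ x : ℝ, |iteratedDeriv i ρ x| ≤ C) (p q i : ℕ) :
    Integrable (fun x : ℝ => iteratedDeriv p (⇑u) x * iteratedDeriv q (⇑u) x
      * iteratedDeriv i ρ x) := by
  have h1 : Integrable (fun x : ℝ => iteratedDeriv p (⇑u) x * iteratedDeriv q (⇑u) x) := by
    rw [← Dn_coe, ← Dn_coe]
    exact Integrable.bdd_mul (Dn q u).integrable (Dn p u).continuous.aestronglyMeasurable
      (ae_of_all _ (schwartz_bdd (Dn p u)).choose_spec)
  have hmeas : AEStronglyMeasurable (fun x : ℝ => iteratedDeriv i ρ x) volume :=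
    (hρ.continuous_iteratedDeriv i (by exact_mod_cast le_top)).aestronglyMeasurable
  obtain ⟨C, hC⟩ := hbd i
  have := Integrable.bdd_mul h1 hmeas (c := C) (ae_of_all _ fun x => by simpa [Real.norm_eq_abs] using hC x)
  exact this.congr (by filter_upwards with x; ring)

lemma key_ibp (u : SchwartzMap ℝ ℝ) {ρ : ℝ → ℝ} (hρ : ContDiff ℝ (⊤ : ℕ∞) ρ)
    (hbd : ∀ i : ℕ, ∃ C : ℝ, ∀ x : ℝ, |iteratedDeriv i ρ x| ≤ C) (n m a : ℕ) :
    bracket (⇑u) ρ (n+1) m a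
      = - bracket (⇑u) ρ n (m+1) a - bracket (⇑u) ρ n m (a+1) := by
  set F : ℝ → ℝ := fun x =>
    iteratedDeriv n (⇑u) x * iteratedDeriv m (⇑u) x * iteratedDeriv a ρ x with hF
  set G : ℝ → ℝ := fun x =>
    (iteratedDeriv (n+1) (⇑u) x * iteratedDeriv m (⇑u) x
      + iteratedDeriv n (⇑u) x * iteratedDeriv (m+1) (⇑u) x) * iteratedDeriv a ρ x
    + iteratedDeriv n (⇑u) x * iteratedDeriv m (⇑u) x * iteratedDeriv (a+1) ρ x with hG
  have hderiv : ∀ x : ℝ, HasDerivAt F (G x) x := by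
    intro x
    have h1 : HasDerivAt (iteratedDeriv n (⇑u)) (iteratedDeriv (n+1) (⇑u) x) x := by
      rw [iteratedDeriv_succ, ← Dn_coe]
      exact ((Dn n u).differentiable x).hasDerivAt
    have h2 : HasDerivAt (iteratedDeriv m (⇑u)) (iteratedDeriv (m+1) (⇑u) x) x := by
      rw [iteratedDeriv_succ, ← Dn_coe]
      exact ((Dn m u).differentiable x).hasDerivAt
    have h3 : HasDerivAt (iteratedDeriv a ρ) (iteratedDeriv (a+1) ρ x) x := by
      rw [iteratedDeriv_succ]
      exact ((rho_diff hρ a) x).hasDerivAt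
    exact (h1.mul h2).mul h3
  have i1 := term_integrable u hρ hbd (n+1) m a
  have i2 := term_integrable u hρ hbd n (m+1) a
  have i3 := term_integrable u hρ hbd n m (a+1)
  have hGint : Integrable G := by
    refine ((i1.add i2).add i3).congr ?_
    filter_upwards with x
    simp only [hG, Pi.add_apply]
    ring
  obtain ⟨C, hC⟩ := hbd a
  have hCn : ∀ x : ℝ, ((‖·‖) ∘ fun x : ℝ => iteratedDeriv a ρ x) x ≤ C := fun x => by
    simpa [Real.norm_eq_abs] using hC x
  have lmul : Tendsto (fun x : ℝ => iteratedDeriv n (⇑u) x * iteratedDeriv m (⇑u) x)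
      (Filter.cocompact ℝ) (nhds 0) := by
    rw [← Dn_coe, ← Dn_coe]
    simpa using (schwartz_tendsto_cocompact (Dn n u)).mul (schwartz_tendsto_cocompact (Dn m u))
  have htop : Tendsto F Filter.atTop (nhds 0) := by
    refine Tendsto.zero_mul_isBoundedUnder_le ?_ (Filter.isBoundedUnder_of ⟨C, hCn⟩)
    exact lmul.mono_left (by rw [cocompact_eq_atBot_atTop]; exact le_sup_right)
  have hbot : Tendsto F Filter.atBot (nhds 0) := by
    refine Tendsto.zero_mul_isBoundedUnder_le ?_ (Filter.isBoundedUnder_of ⟨C, hCn⟩)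
    exact lmul.mono_left (by rw [cocompact_eq_atBot_atTop]; exact le_sup_left)
  have hGzero : ∫ x : ℝ, G x = 0 := by
    rw [← intervalIntegral.integral_Iic_add_Ioi (b := (0:ℝ)) hGint.integrableOn hGint.integrableOn]
    rw [integral_Iic_of_hasDerivAt_of_tendsto' (fun x _ => hderiv x)
      hGint.integrableOn hbot]
    rw [integral_Ioi_of_hasDerivAt_of_tendsto' (fun x _ => hderiv x)
      hGint.integrableOn htop]
    ring
  have hsplit : ∫ x : ℝ, G x
      = bracket (⇑u) ρ (n+1) m a + bracket (⇑u) ρ n (m+1) a + bracket (⇑u) ρ n m (a+1) := by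
    simp only [bracket]
    have e1 : ∫ x : ℝ, G x = ∫ x : ℝ,
        (iteratedDeriv (n+1) (⇑u) x * iteratedDeriv m (⇑u) x * iteratedDeriv a ρ x
          + iteratedDeriv n (⇑u) x * iteratedDeriv (m+1) (⇑u) x * iteratedDeriv a ρ x)
        + iteratedDeriv n (⇑u) x * iteratedDeriv m (⇑u) x * iteratedDeriv (a+1) ρ x := by
      congr 1
      funext x
      simp only [hG]
      ring
    have i12 : Integrable (fun x : ℝ =>
        iteratedDeriv (n+1) (⇑u) x * iteratedDeriv m (⇑u) x * iteratedDeriv a ρ x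
          + iteratedDeriv n (⇑u) x * iteratedDeriv (m+1) (⇑u) x * iteratedDeriv a ρ x) := by
      exact i1.add i2
    rw [e1, integral_add i12 i3, integral_add i1 i2]
  rw [hsplit] at hGzero
  linarith

lemma bracket_symm (u ρ : ℝ → ℝ) (p q a : ℕ) :
    bracket u ρ p q a = bracket u ρ q p a := by
  unfold bracket
  congr 1
  funext x
  ring

def Good (k : ℕ) : Prop := ∀ n : ℕ, k ≤ n →
  ∃ c : ℕ → ℝ, (∀ j : ℕ, j ≤ k / 2 → 0 < c j) ∧
    ∀ a : ℕ, ∀ u : SchwartzMap ℝ ℝ, ∀ ρ : ℝ → ℝ, ContDiff ℝ (⊤ : ℕ∞) ρ →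
      (∀ i : ℕ, ∃ C : ℝ, ∀ x : ℝ, |iteratedDeriv i ρ x| ≤ C) →
      bracket (⇑u) ρ n (n - k) a
        = ∑ j ∈ Finset.range (k / 2 + 1),
            c j * (-1 : ℝ) ^ (k + j) * bracket (⇑u) ρ (n - k + j) (n - k + j) (a + (k - 2 * j))

lemma good : ∀ k, Good k := by
  intro k
  induction k using Nat.strong_induction_on with
  | _ k ih =>
    match k with
    | 0 =>
      intro n _
      exact ⟨fun _ => 1, fun _ _ => one_pos, fun a u ρ _ _ => by simp⟩
    | 1 =>
      intro n hn
      refine ⟨fun _ => 1/2, fun _ _ => by norm_num, ?_⟩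
      intro a u ρ hρ hbd
      obtain ⟨n, rfl⟩ : ∃ m, n = m + 1 := ⟨n - 1, by omega⟩
      have h := key_ibp u hρ hbd n n a
      rw [bracket_symm (⇑u) ρ n (n+1) a] at h
      simp only [Finset.sum_range_one, Nat.add_sub_cancel, Nat.add_zero, add_zero,
        Nat.mul_zero, Nat.sub_zero, pow_one]
      norm_num
      linarith
    | (k+2) =>
      intro n hn
      obtain ⟨c', hc'pos, hc'⟩ := ih k (by omega) (n-1) (by omega)
      obtain ⟨c'', hc''pos, hc''⟩ := ih (k+1) (by omega) (n-1) (by omega)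
      have e3 : (k+2)/2 = k/2 + 1 := by omega
      refine ⟨fun j => (if j ≤ (k+1)/2 then c'' j else 0)
        + (if 1 ≤ j ∧ j ≤ k/2+1 then c' (j-1) else 0), ?_, ?_⟩
      · intro j hj
        beta_reduce
        rw [e3] at hj
        have h1 : 0 ≤ (if j ≤ (k+1)/2 then c'' j else 0) := by
          split
          · exact (hc''pos j (by omega)).le
          · exact le_rfl
        rcases Nat.eq_zero_or_pos j with rfl | hj1
        · have h0 : (0:ℕ) ≤ (k+1)/2 := Nat.zero_le _
          simp only [if_pos h0]
          have := hc''pos 0 (Nat.zero_le _)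
          norm_num
          linarith [this]
        · have h2 : 0 < (if 1 ≤ j ∧ j ≤ k/2+1 then c' (j-1) else 0) := by
            rw [if_pos ⟨hj1, hj⟩]
            exact hc'pos (j-1) (by omega)
          linarith
      · intro a u ρ hρ hbd
        beta_reduce
        have hkey := key_ibp u hρ hbd (n-1) (n-(k+2)) a
        rw [show n - 1 + 1 = n from by omega] at hkey
        rw [show n - (k+2) + 1 = (n-1) - k from by omega] at hkey
        rw [show n - (k+2) = (n-1) - (k+1) from by omega] at hkey
        rw [hc' a u ρ hρ hbd, hc'' (a+1) u ρ hρ hbd] at hkey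
        rw [show n - 1 - (k+1) = n - (k+2) from by omega] at hkey
        rw [hkey, e3]
        -- split the sum
        have hsplit : ∑ j ∈ Finset.range (k/2+1+1),
            ((if j ≤ (k+1)/2 then c'' j else 0) + (if 1 ≤ j ∧ j ≤ k/2+1 then c' (j-1) else 0))
              * (-1:ℝ)^(k+2+j) * bracket (⇑u) ρ (n-(k+2)+j) (n-(k+2)+j) (a+((k+2)-2*j))
          = (∑ j ∈ Finset.range (k/2+1+1),
              (if j ≤ (k+1)/2 then c'' j else 0)
                * (-1:ℝ)^(k+2+j) * bracket (⇑u) ρ (n-(k+2)+j) (n-(k+2)+j) (a+((k+2)-2*j)))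
            + (∑ j ∈ Finset.range (k/2+1+1),
              (if 1 ≤ j ∧ j ≤ k/2+1 then c' (j-1) else 0)
                * (-1:ℝ)^(k+2+j) * bracket (⇑u) ρ (n-(k+2)+j) (n-(k+2)+j) (a+((k+2)-2*j))) := by
          rw [← Finset.sum_add_distrib]
          refine Finset.sum_congr rfl fun j _ => by ring
        rw [hsplit]
        have hS1 : ∑ j ∈ Finset.range (k/2+1+1),
            (if j ≤ (k+1)/2 then c'' j else 0)
              * (-1:ℝ)^(k+2+j) * bracket (⇑u) ρ (n-(k+2)+j) (n-(k+2)+j) (a+((k+2)-2*j))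
          = - ∑ j ∈ Finset.range ((k+1)/2+1),
              c'' j * (-1:ℝ)^(k+1+j)
                * bracket (⇑u) ρ (n-(k+2)+j) (n-(k+2)+j) (a+1+((k+1)-2*j)) := by
          rw [← Finset.sum_subset (Finset.range_subset_range.2 (show (k+1)/2+1 ≤ k/2+1+1 from by omega))
            (fun j _ hj => by
              rw [if_neg (by simp at hj; omega)]
              ring)]
          rw [← Finset.sum_neg_distrib]
          refine Finset.sum_congr rfl fun j hj => ?_
          have hjle : j ≤ (k+1)/2 := by simpa using Nat.lt_succ_iff.mp (Finset.mem_range.mp hj)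
          rw [if_pos hjle]
          rw [show a+((k+2)-2*j) = a+1+((k+1)-2*j) from by omega,
            show k+2+j = (k+1+j)+1 from by omega, pow_succ]
          ring
        have hS2 : ∑ j ∈ Finset.range (k/2+1+1),
            (if 1 ≤ j ∧ j ≤ k/2+1 then c' (j-1) else 0)
              * (-1:ℝ)^(k+2+j) * bracket (⇑u) ρ (n-(k+2)+j) (n-(k+2)+j) (a+((k+2)-2*j))
          = - ∑ j ∈ Finset.range (k/2+1),
              c' j * (-1:ℝ)^(k+j)
                * bracket (⇑u) ρ (n-1-k+j) (n-1-k+j) (a+(k-2*j)) := by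
          rw [Finset.sum_range_succ']
          rw [if_neg (by omega)]
          rw [← Finset.sum_neg_distrib]
          simp only [zero_mul, add_zero]
          refine Finset.sum_congr rfl fun i hi => ?_
          have hile : i ≤ k/2 := Nat.lt_succ_iff.mp (Finset.mem_range.mp hi)
          rw [if_pos ⟨by omega, by omega⟩]
          rw [show i+1-1 = i from by omega,
            show n-(k+2)+(i+1) = n-1-k+i from by omega,
            show a+((k+2)-2*(i+1)) = a+(k-2*i) from by omega,
            show k+2+(i+1) = (k+i)+3 from by omega, pow_add]
          norm_num
        rw [hS1, hS2]
        ring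

end BracketReductionAux

theorem bracket_reduction
    (n k : ℕ) (hk1 : 1 ≤ k) (hkn : k ≤ n) :
    ∃ c : ℕ → ℝ, (∀ j : ℕ, j ≤ k / 2 → 0 < c j) ∧
      ∀ a : ℕ, ∀ u : SchwartzMap ℝ ℝ, ∀ ρ : ℝ → ℝ, ContDiff ℝ (⊤ : ℕ∞) ρ →
        (∀ i : ℕ, ∃ C : ℝ, ∀ x : ℝ, |iteratedDeriv i ρ x| ≤ C) →
        bracket (⇑u) ρ n (n - k) a
          = ∑ j ∈ Finset.range (k / 2 + 1),
              c j * (-1 : ℝ) ^ (k + j)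
                * bracket (⇑u) ρ (n - k + j) (n - k + j) (a + (k - 2 * j)) :=
  BracketReductionAux.good k n hkn
end

section
/- For every m ∈ ℤ⁺ there exist positive constants c_j (j = 0, …, m) such that ⟨2m, 0, 0⟩ = Σ_{j=0}^{m} c_j (−1)^j ⟨j, j, 2(m−j)⟩, where for u Schwartz and ρ smooth with all derivatives bounded, ⟨n, m, a⟩ := ∫_ℝ (∂_x^n u)(∂_x^m u) ρ^{(a)} dx. -/
open MeasureTheory Real Set
open scoped ENNReal

namespace BracketAux
open MeasureTheory


lemma schwartz_bounded (f : SchwartzMap ℝ ℝ) : ∃ C, ∀ x, ‖f x‖ ≤ C := by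
  refine ⟨SchwartzMap.seminorm ℝ 0 0 f, fun x => ?_⟩
  have := SchwartzMap.le_seminorm ℝ 0 0 f x
  simpa using this

lemma iteratedDeriv_schwartz (u : SchwartzMap ℝ ℝ) (n : ℕ) :
    ∃ v : SchwartzMap ℝ ℝ, iteratedDeriv n ⇑u = ⇑v := by
  induction n with
  | zero => exact ⟨u, by simp⟩
  | succ n ih =>
    obtain ⟨v, hv⟩ := ih
    refine ⟨SchwartzMap.derivCLM ℝ ℝ v, ?_⟩
    funext x
    rw [iteratedDeriv_succ, hv, SchwartzMap.derivCLM_apply]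

lemma hderiv_u (u : SchwartzMap ℝ ℝ) (n : ℕ) (x : ℝ) :
    HasDerivAt (iteratedDeriv n ⇑u) (iteratedDeriv (n+1) ⇑u x) x := by
  obtain ⟨v, hv⟩ := iteratedDeriv_schwartz u n
  rw [iteratedDeriv_succ, hv]
  exact (v.differentiable x).hasDerivAt

lemma hderiv_rho {ρ : ℝ → ℝ} (hρ : ContDiff ℝ (⊤ : ℕ∞) ρ) (a : ℕ) (x : ℝ) :
    HasDerivAt (iteratedDeriv a ρ) (iteratedDeriv (a+1) ρ x) x := by
  rw [iteratedDeriv_succ]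
  exact ((hρ.differentiable_iteratedDeriv a (by exact_mod_cast ENat.coe_lt_top a)) x).hasDerivAt

lemma integrable_aux (u : SchwartzMap ℝ ℝ) (ρ : ℝ → ℝ) (hρ : ContDiff ℝ (⊤ : ℕ∞) ρ)
    (hb : ∀ i : ℕ, ∃ C : ℝ, ∀ x : ℝ, |iteratedDeriv i ρ x| ≤ C) (n k a : ℕ) :
    Integrable (fun x => iteratedDeriv n ⇑u x * iteratedDeriv k ⇑u x * iteratedDeriv a ρ x) := by
  obtain ⟨v, hv⟩ := iteratedDeriv_schwartz u n
  obtain ⟨w, hw⟩ := iteratedDeriv_schwartz u k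
  obtain ⟨C, hC⟩ := hb a
  obtain ⟨D, hD⟩ := schwartz_bounded v
  rw [hv, hw]
  have h1 : Integrable (⇑w) := w.integrable
  have hmeas : AEStronglyMeasurable (fun x => v x * iteratedDeriv a ρ x) volume :=
    (v.continuous.mul (hρ.continuous_iteratedDeriv a (by exact_mod_cast le_top))).aestronglyMeasurable
  have hbd : ∃ C', ∀ x, ‖v x * iteratedDeriv a ρ x‖ ≤ C' := by
    refine ⟨D * C, fun x => ?_⟩
    rw [norm_mul]
    exact mul_le_mul (hD x) (hC x) (abs_nonneg _) (le_trans (norm_nonneg _) (hD x))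
  have := h1.bdd_mul hmeas (ae_of_all _ hbd.choose_spec)
  have heq : (fun x => v x * w x * iteratedDeriv a ρ x)
      = fun x => (v x * iteratedDeriv a ρ x) * w x := by funext x; ring
  rw [heq]
  exact this

lemma bracket_comm (u ρ : ℝ → ℝ) (n m a : ℕ) :
    bracket u ρ n m a = bracket u ρ m n a := by
  unfold bracket
  congr 1
  funext x
  ring

lemma ibp (u : SchwartzMap ℝ ℝ) (ρ : ℝ → ℝ) (hρ : ContDiff ℝ (⊤ : ℕ∞) ρ)
    (hb : ∀ i : ℕ, ∃ C : ℝ, ∀ x : ℝ, |iteratedDeriv i ρ x| ≤ C) (n k a : ℕ) :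
    bracket ⇑u ρ (n+1) k a
      = -(bracket ⇑u ρ n (k+1) a + bracket ⇑u ρ n k (a+1)) := by
  have I1 := integrable_aux u ρ hρ hb n (k+1) a
  have I2 := integrable_aux u ρ hρ hb n k (a+1)
  have I3 := integrable_aux u ρ hρ hb (n+1) k a
  have I4 := integrable_aux u ρ hρ hb n k a
  have hu : ∀ x, HasDerivAt (iteratedDeriv n ⇑u) (iteratedDeriv (n+1) ⇑u x) x :=
    hderiv_u u n
  have hv : ∀ x, HasDerivAt (fun y => iteratedDeriv k ⇑u y * iteratedDeriv a ρ y)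
      (iteratedDeriv (k+1) ⇑u x * iteratedDeriv a ρ x
        + iteratedDeriv k ⇑u x * iteratedDeriv (a+1) ρ x) x :=
    fun x => (hderiv_u u k x).mul (hderiv_rho hρ a x)
  have huv' : Integrable ((iteratedDeriv n ⇑u) * fun y =>
      iteratedDeriv (k+1) ⇑u y * iteratedDeriv a ρ y
        + iteratedDeriv k ⇑u y * iteratedDeriv (a+1) ρ y) := by
    have heq : ((iteratedDeriv n ⇑u) * fun y =>
        iteratedDeriv (k+1) ⇑u y * iteratedDeriv a ρ y
          + iteratedDeriv k ⇑u y * iteratedDeriv (a+1) ρ y)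
        = fun y => (iteratedDeriv n ⇑u y * iteratedDeriv (k+1) ⇑u y * iteratedDeriv a ρ y)
          + (iteratedDeriv n ⇑u y * iteratedDeriv k ⇑u y * iteratedDeriv (a+1) ρ y) := by
      funext y; simp only [Pi.mul_apply]; ring
    rw [heq]
    exact I1.add I2
  have hu'v : Integrable ((iteratedDeriv (n+1) ⇑u) * fun y =>
      iteratedDeriv k ⇑u y * iteratedDeriv a ρ y) := by
    have heq : ((iteratedDeriv (n+1) ⇑u) * fun y =>
        iteratedDeriv k ⇑u y * iteratedDeriv a ρ y)
        = fun y => iteratedDeriv (n+1) ⇑u y * iteratedDeriv k ⇑u y * iteratedDeriv a ρ y := by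
      funext y; simp only [Pi.mul_apply]; ring
    rw [heq]; exact I3
  have huv : Integrable ((iteratedDeriv n ⇑u) * fun y =>
      iteratedDeriv k ⇑u y * iteratedDeriv a ρ y) := by
    have heq : ((iteratedDeriv n ⇑u) * fun y =>
        iteratedDeriv k ⇑u y * iteratedDeriv a ρ y)
        = fun y => iteratedDeriv n ⇑u y * iteratedDeriv k ⇑u y * iteratedDeriv a ρ y := by
      funext y; simp only [Pi.mul_apply]; ring
    rw [heq]; exact I4
  have key := integral_mul_deriv_eq_deriv_mul_of_integrable (fun x _ => hu x) (fun x _ => hv x) huv' hu'v huv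
  -- key : ∫ x, iD n x * (iD(k+1) x * ρa x + iD k x * ρ(a+1) x)
  --        = - ∫ x, iD (n+1) x * (iD k x * ρa x)
  have split : (∫ x : ℝ, iteratedDeriv n ⇑u x *
        (iteratedDeriv (k+1) ⇑u x * iteratedDeriv a ρ x
          + iteratedDeriv k ⇑u x * iteratedDeriv (a+1) ρ x))
      = bracket ⇑u ρ n (k+1) a + bracket ⇑u ρ n k (a+1) := by
    have heq : (fun x : ℝ => iteratedDeriv n ⇑u x *
        (iteratedDeriv (k+1) ⇑u x * iteratedDeriv a ρ x
          + iteratedDeriv k ⇑u x * iteratedDeriv (a+1) ρ x))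
        = fun x => (iteratedDeriv n ⇑u x * iteratedDeriv (k+1) ⇑u x * iteratedDeriv a ρ x)
          + (iteratedDeriv n ⇑u x * iteratedDeriv k ⇑u x * iteratedDeriv (a+1) ρ x) := by
      funext x; ring
    rw [show (∫ x : ℝ, iteratedDeriv n ⇑u x *
        (iteratedDeriv (k+1) ⇑u x * iteratedDeriv a ρ x
          + iteratedDeriv k ⇑u x * iteratedDeriv (a+1) ρ x))
      = ∫ x : ℝ, ((iteratedDeriv n ⇑u x * iteratedDeriv (k+1) ⇑u x * iteratedDeriv a ρ x)
          + (iteratedDeriv n ⇑u x * iteratedDeriv k ⇑u x * iteratedDeriv (a+1) ρ x)) from by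
        rw [heq]]
    exact integral_add I1 I2
  have e1 : bracket ⇑u ρ (n+1) k a
      = ∫ x : ℝ, iteratedDeriv (n+1) ⇑u x * (iteratedDeriv k ⇑u x * iteratedDeriv a ρ x) := by
    unfold bracket
    congr 1
    funext x
    ring
  rw [e1, ← split]
  linarith [key]



noncomputable def gd : ℕ → (ℕ → ℝ) × (ℕ → ℝ)
  | 0 => (fun j => if j = 0 then 1 else 0, fun j => if j = 0 then 1/2 else 0)
  | p + 1 =>
      let g := (gd p).1
      let d := (gd p).2
      let g' : ℕ → ℝ := fun j => match j with
        | 0 => d 0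
        | i + 1 => d (i+1) + g i
      (g', fun j => match j with
        | 0 => g' 0
        | i + 1 => g' (i+1) + d i)

noncomputable def gam (p j : ℕ) : ℝ := (gd p).1 j
noncomputable def del (p j : ℕ) : ℝ := (gd p).2 j

lemma gam_zero_zero : gam 0 0 = 1 := by simp [gam, gd]
lemma gam_zero_succ (j : ℕ) : gam 0 (j+1) = 0 := by simp [gam, gd]
lemma del_zero_zero : del 0 0 = 1/2 := by simp [del, gd]
lemma del_zero_succ (j : ℕ) : del 0 (j+1) = 0 := by simp [del, gd]
lemma gam_succ_zero (p : ℕ) : gam (p+1) 0 = del p 0 := by simp [gam, del, gd]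
lemma gam_succ_succ (p j : ℕ) : gam (p+1) (j+1) = del p (j+1) + gam p j := by
  simp [gam, del, gd]
lemma del_succ_zero (p : ℕ) : del (p+1) 0 = gam (p+1) 0 := by simp [gam, del, gd]
lemma del_succ_succ (p j : ℕ) : del (p+1) (j+1) = gam (p+1) (j+1) + del p j := by
  simp [gam, del, gd]

lemma nonneg : ∀ p, (∀ j, 0 ≤ gam p j) ∧ (∀ j, 0 ≤ del p j) := by
  intro p
  induction p with
  | zero =>
    constructor <;> intro j <;> cases j <;>
      simp [gam_zero_zero, gam_zero_succ, del_zero_zero, del_zero_succ] <;> norm_num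
  | succ p ih =>
    have hg : ∀ j, 0 ≤ gam (p+1) j := by
      intro j
      cases j with
      | zero => rw [gam_succ_zero]; exact ih.2 0
      | succ i => rw [gam_succ_succ]; exact add_nonneg (ih.2 _) (ih.1 _)
    refine ⟨hg, fun j => ?_⟩
    cases j with
    | zero => rw [del_succ_zero]; exact hg 0
    | succ i => rw [del_succ_succ]; exact add_nonneg (hg _) (ih.2 _)

lemma eq_zero : ∀ p, (∀ j, p < j → gam p j = 0) ∧ (∀ j, p < j → del p j = 0) := by
  intro p
  induction p with
  | zero =>
    constructor <;> intro j hj <;>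
      (obtain ⟨i, rfl⟩ : ∃ i, j = i + 1 := ⟨j - 1, by omega⟩) <;>
      simp [gam_zero_succ, del_zero_succ]
  | succ p ih =>
    have hg : ∀ j, p + 1 < j → gam (p+1) j = 0 := by
      intro j hj
      obtain ⟨i, rfl⟩ : ∃ i, j = i + 1 := ⟨j - 1, by omega⟩
      rw [gam_succ_succ, ih.1 i (by omega), ih.2 (i+1) (by omega), add_zero]
    refine ⟨hg, fun j hj => ?_⟩
    obtain ⟨i, rfl⟩ : ∃ i, j = i + 1 := ⟨j - 1, by omega⟩
    rw [del_succ_succ, hg _ hj, ih.2 i (by omega), add_zero]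

lemma pos : ∀ p, (∀ j, j ≤ p → 0 < gam p j) ∧ (∀ j, j ≤ p → 0 < del p j) := by
  intro p
  induction p with
  | zero =>
    constructor <;> intro j hj <;> interval_cases j <;>
      simp [gam_zero_zero, del_zero_zero] <;> norm_num
  | succ p ih =>
    have hg : ∀ j, j ≤ p + 1 → 0 < gam (p+1) j := by
      intro j hj
      cases j with
      | zero => rw [gam_succ_zero]; exact ih.2 0 (Nat.zero_le _)
      | succ i =>
        rw [gam_succ_succ]
        exact add_pos_of_nonneg_of_pos ((nonneg p).2 _) (ih.1 i (by omega))
    refine ⟨hg, fun j hj => ?_⟩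
    cases j with
    | zero => rw [del_succ_zero]; exact hg 0 (Nat.zero_le _)
    | succ i =>
      rw [del_succ_succ]
      exact add_pos_of_pos_of_nonneg (hg _ hj) ((nonneg p).2 _)

lemma main (u : SchwartzMap ℝ ℝ) (ρ : ℝ → ℝ) (hρ : ContDiff ℝ (⊤ : ℕ∞) ρ)
    (hb : ∀ i : ℕ, ∃ C : ℝ, ∀ x : ℝ, |iteratedDeriv i ρ x| ≤ C) (p : ℕ) :
    (∀ k a : ℕ, bracket ⇑u ρ (k + 2*p) k a = ∑ j ∈ Finset.range (p+1),
        gam p j * (-1:ℝ)^j * bracket ⇑u ρ (k+j) (k+j) (a + 2*(p-j)))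
  ∧ (∀ k a : ℕ, bracket ⇑u ρ (k + 2*p + 1) k a = ∑ j ∈ Finset.range (p+1),
        del p j * (-1:ℝ)^(j+1) * bracket ⇑u ρ (k+j) (k+j) (a + 2*(p-j) + 1)) := by
  induction p with
  | zero =>
    constructor
    · intro k a
      simp [gam_zero_zero]
    · intro k a
      have h := ibp u ρ hρ hb k k a
      have hc := bracket_comm (⇑u) ρ k (k+1) a
      rw [hc] at h
      simp only [zero_add, Finset.sum_range_one, del_zero_zero, Nat.mul_zero, Nat.add_zero,
        Nat.sub_zero, Nat.sub_self, pow_one, Nat.mul_zero]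
      linarith
  | succ p ih =>
    have heven : ∀ k a : ℕ, bracket ⇑u ρ (k + 2*(p+1)) k a
        = ∑ j ∈ Finset.range (p+1+1),
            gam (p+1) j * (-1:ℝ)^j * bracket ⇑u ρ (k+j) (k+j) (a + 2*(p+1-j)) := by
      intro k a
      have h1 : bracket ⇑u ρ (k + 2*(p+1)) k a
          = -(bracket ⇑u ρ (k+2*p+1) (k+1) a + bracket ⇑u ρ (k+2*p+1) k (a+1)) := by
        have := ibp u ρ hρ hb (k+2*p+1) k a
        rw [show k+2*p+1+1 = k+2*(p+1) from by ring] at this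
        exact this
      have h2 : bracket ⇑u ρ (k+2*p+1) (k+1) a = ∑ j ∈ Finset.range (p+1),
          gam p j * (-1:ℝ)^j * bracket ⇑u ρ ((k+1)+j) ((k+1)+j) (a + 2*(p-j)) := by
        have := ih.1 (k+1) a
        rw [show (k+1)+2*p = k+2*p+1 from by ring] at this
        exact this
      have h3 := ih.2 k (a+1)
      -- abbreviations
      set T1 : ℝ := ∑ i ∈ Finset.range (p+1),
        del p (i+1) * (-1:ℝ)^(i+1) * bracket ⇑u ρ (k+(i+1)) (k+(i+1)) (a + 2*(p-i)) with hT1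
      set T2 : ℝ := ∑ i ∈ Finset.range (p+1),
        gam p i * (-1:ℝ)^(i+1) * bracket ⇑u ρ (k+(i+1)) (k+(i+1)) (a + 2*(p-i)) with hT2
      set c0 : ℝ := del p 0 * bracket ⇑u ρ k k (a + 2*(p+1)) with hc0
      have htgt : (∑ j ∈ Finset.range (p+1+1),
          gam (p+1) j * (-1:ℝ)^j * bracket ⇑u ρ (k+j) (k+j) (a + 2*(p+1-j)))
          = T1 + T2 + c0 := by
        rw [Finset.sum_range_succ']
        have es : ∀ i ∈ Finset.range (p+1),
            gam (p+1) (i+1) * (-1:ℝ)^(i+1) * bracket ⇑u ρ (k+(i+1)) (k+(i+1)) (a + 2*(p+1-(i+1)))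
            = del p (i+1) * (-1:ℝ)^(i+1) * bracket ⇑u ρ (k+(i+1)) (k+(i+1)) (a + 2*(p-i))
              + gam p i * (-1:ℝ)^(i+1) * bracket ⇑u ρ (k+(i+1)) (k+(i+1)) (a + 2*(p-i)) := by
          intro i _
          rw [gam_succ_succ, show p+1-(i+1) = p-i from by omega]
          ring
        rw [Finset.sum_congr rfl es, Finset.sum_add_distrib]
        have e0 : gam (p+1) 0 * (-1:ℝ)^(0:ℕ) * bracket ⇑u ρ (k+0) (k+0) (a + 2*(p+1-0)) = c0 := by
          rw [gam_succ_zero, hc0]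
          norm_num
        rw [e0, hT1, hT2]
      have hS1 : -(∑ j ∈ Finset.range (p+1),
          gam p j * (-1:ℝ)^j * bracket ⇑u ρ ((k+1)+j) ((k+1)+j) (a + 2*(p-j))) = T2 := by
        rw [hT2, ← Finset.sum_neg_distrib]
        apply Finset.sum_congr rfl
        intro i _
        rw [show (k+1)+i = k+(i+1) from by ring]
        ring
      have hS2 : -(∑ j ∈ Finset.range (p+1),
          del p j * (-1:ℝ)^(j+1) * bracket ⇑u ρ (k+j) (k+j) ((a+1) + 2*(p-j) + 1)) = T1 + c0 := by
        have step1 : -(∑ j ∈ Finset.range (p+1),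
            del p j * (-1:ℝ)^(j+1) * bracket ⇑u ρ (k+j) (k+j) ((a+1) + 2*(p-j) + 1))
            = ∑ j ∈ Finset.range (p+1),
              del p j * (-1:ℝ)^j * bracket ⇑u ρ (k+j) (k+j) ((a+1) + 2*(p-j) + 1) := by
          rw [← Finset.sum_neg_distrib]
          apply Finset.sum_congr rfl
          intro i _
          ring
        rw [step1, Finset.sum_range_succ']
        have es : ∀ i ∈ Finset.range p,
            del p (i+1) * (-1:ℝ)^(i+1) * bracket ⇑u ρ (k+(i+1)) (k+(i+1)) ((a+1) + 2*(p-(i+1)) + 1)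
            = del p (i+1) * (-1:ℝ)^(i+1) * bracket ⇑u ρ (k+(i+1)) (k+(i+1)) (a + 2*(p-i)) := by
          intro i hi
          rw [Finset.mem_range] at hi
          rw [show (a+1) + 2*(p-(i+1)) + 1 = a + 2*(p-i) from by omega]
        rw [Finset.sum_congr rfl es]
        have e0 : del p 0 * (-1:ℝ)^(0:ℕ) * bracket ⇑u ρ (k+0) (k+0) ((a+1) + 2*(p-0) + 1) = c0 := by
          rw [hc0, show (a+1) + 2*(p-0) + 1 = a + 2*(p+1) from by omega]
          norm_num
        rw [e0]
        congr 1
        rw [hT1, Finset.sum_range_succ, (eq_zero p).2 (p+1) (by omega)]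
        ring
      rw [h1, h2, h3, htgt]
      linarith [hS1, hS2]
    refine ⟨heven, ?_⟩
    intro k a
    have h1 : bracket ⇑u ρ (k + 2*(p+1) + 1) k a
        = -(bracket ⇑u ρ (k+2*(p+1)) (k+1) a + bracket ⇑u ρ (k+2*(p+1)) k (a+1)) :=
      ibp u ρ hρ hb (k+2*(p+1)) k a
    have h2 : bracket ⇑u ρ (k+2*(p+1)) (k+1) a = ∑ j ∈ Finset.range (p+1),
        del p j * (-1:ℝ)^(j+1) * bracket ⇑u ρ ((k+1)+j) ((k+1)+j) (a + 2*(p-j) + 1) := by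
      have := ih.2 (k+1) a
      rw [show (k+1)+2*p+1 = k+2*(p+1) from by ring] at this
      exact this
    have h3 := heven k (a+1)
    set U1 : ℝ := ∑ i ∈ Finset.range (p+1),
      del p i * (-1:ℝ)^i * bracket ⇑u ρ (k+(i+1)) (k+(i+1)) (a + 2*(p-i) + 1) with hU1
    set U2 : ℝ := ∑ j ∈ Finset.range (p+1+1),
      gam (p+1) j * (-1:ℝ)^(j+1) * bracket ⇑u ρ (k+j) (k+j) (a + 2*(p+1-j) + 1) with hU2
    have htgt : (∑ j ∈ Finset.range (p+1+1),
        del (p+1) j * (-1:ℝ)^(j+1) * bracket ⇑u ρ (k+j) (k+j) (a + 2*(p+1-j) + 1))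
        = U2 + U1 := by
      rw [Finset.sum_range_succ']
      have es : ∀ i ∈ Finset.range (p+1),
          del (p+1) (i+1) * (-1:ℝ)^(i+1+1) * bracket ⇑u ρ (k+(i+1)) (k+(i+1)) (a + 2*(p+1-(i+1)) + 1)
          = gam (p+1) (i+1) * (-1:ℝ)^(i+1+1) * bracket ⇑u ρ (k+(i+1)) (k+(i+1)) (a + 2*(p+1-(i+1)) + 1)
            + del p i * (-1:ℝ)^i * bracket ⇑u ρ (k+(i+1)) (k+(i+1)) (a + 2*(p-i) + 1) := by
        intro i _
        rw [del_succ_succ, show p+1-(i+1) = p-i from by omega]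
        ring
      rw [Finset.sum_congr rfl es, Finset.sum_add_distrib]
      have e0 : del (p+1) 0 * (-1:ℝ)^(0+1) * bracket ⇑u ρ (k+0) (k+0) (a + 2*(p+1-0) + 1)
          = gam (p+1) 0 * (-1:ℝ)^(0+1) * bracket ⇑u ρ (k+0) (k+0) (a + 2*(p+1-0) + 1) := by
        rw [del_succ_zero]
      have hU2' : U2 = (∑ i ∈ Finset.range (p+1),
          gam (p+1) (i+1) * (-1:ℝ)^(i+1+1) * bracket ⇑u ρ (k+(i+1)) (k+(i+1)) (a + 2*(p+1-(i+1)) + 1))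
          + gam (p+1) 0 * (-1:ℝ)^(0+1) * bracket ⇑u ρ (k+0) (k+0) (a + 2*(p+1-0) + 1) := by
        rw [hU2, Finset.sum_range_succ']
      rw [e0, hU1, hU2']
      ring
    have hS1 : -(∑ j ∈ Finset.range (p+1),
        del p j * (-1:ℝ)^(j+1) * bracket ⇑u ρ ((k+1)+j) ((k+1)+j) (a + 2*(p-j) + 1)) = U1 := by
      rw [hU1, ← Finset.sum_neg_distrib]
      apply Finset.sum_congr rfl
      intro i _
      rw [show (k+1)+i = k+(i+1) from by ring]
      ring
    have hS2 : -(∑ j ∈ Finset.range (p+1+1),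
        gam (p+1) j * (-1:ℝ)^j * bracket ⇑u ρ (k+j) (k+j) ((a+1) + 2*(p+1-j))) = U2 := by
      rw [hU2, ← Finset.sum_neg_distrib]
      apply Finset.sum_congr rfl
      intro i _
      rw [show (a+1) + 2*(p+1-i) = a + 2*(p+1-i) + 1 from by omega]
      ring
    rw [h1, h2, h3, htgt]
    linarith [hS1, hS2]

end BracketAux

theorem bracket_even
    (m : ℕ) (hm : 1 ≤ m) :
    ∃ c : ℕ → ℝ, (∀ j : ℕ, j ≤ m → 0 < c j) ∧
      ∀ u : SchwartzMap ℝ ℝ, ∀ ρ : ℝ → ℝ, ContDiff ℝ (⊤ : ℕ∞) ρ →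
        (∀ i : ℕ, ∃ C : ℝ, ∀ x : ℝ, |iteratedDeriv i ρ x| ≤ C) →
        bracket (⇑u) ρ (2 * m) 0 0
          = ∑ j ∈ Finset.range (m + 1),
              c j * (-1 : ℝ) ^ j * bracket (⇑u) ρ j j (2 * (m - j)) := by
  refine ⟨BracketAux.gam m, fun j hj => (BracketAux.pos m).1 j hj, ?_⟩
  intro u ρ hρ hb
  have h := (BracketAux.main u ρ hρ hb m).1 0 0
  simpa using h
end
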